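/- arXiv:1605.06460 — 2 statements merged into one kernel-verified Lean document; each statement's English description precedes it below -/
import Mathlib

section
/- Let (E,ℒ,ℬ) be a labelled space, let α be a nonempty finite labelled path and β ∈ ℒ*(E) be such that αβ is a labelled path. Then h_{[α]β} maps X_{αβ} into X_{(α)β}, and the maps h_{[α]β} : X_{αβ} → X_{(α)β} and g_{(α)β} : X_{(α)β} → X_{αβ} are mutually inverse bijections. -/
open Set

/-- A filter in the sub-poset `P` of a powerset, ordered by inclusion, with least
element `∅`: nonempty, upward-closed within `P`, downward-directed, not containing `∅`. -/
def IsFilterIn {V : Type*} (P F : Set (Set V)) : Prop :=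
  F ⊆ P ∧ F.Nonempty ∧ ∅ ∉ F ∧
    (∀ X ∈ F, ∀ Y ∈ P, X ⊆ Y → Y ∈ F) ∧
    (∀ X ∈ F, ∀ Y ∈ F, ∃ Z ∈ F, Z ⊆ X ∧ Z ⊆ Y)

/-- An ultrafilter in `P` is a maximal filter in `P`. -/
def IsUltrafilterIn {V : Type*} (P F : Set (Set V)) : Prop :=
  IsFilterIn P F ∧ ∀ G : Set (Set V), IsFilterIn P G → F ⊆ G → G = F

/-- A labelled graph: a directed graph with source, range and a surjective labelling map. -/
structure LGraph (V Edg A : Type*) where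
  src : Edg → V
  rng : Edg → V
  lbl : Edg → A
  lbl_surj : Function.Surjective lbl

namespace LGraph

variable {V Edg A : Type*} (G : LGraph V Edg A)

/-- A finite path: a list of composable edges. -/
def IsPath (p : List Edg) : Prop := p.Chain' fun e f => G.rng e = G.src f

/-- The relative range `r(S, α)`, with the convention `r(S, ω) = S`. -/
def relR (S : Set V) : List A → Set V
  | [] => S
  | a :: w =>
      {v | ∃ p : List Edg, G.IsPath p ∧ p.map G.lbl = a :: w ∧
        ∃ h : p ≠ [], G.src (p.head h) ∈ S ∧ G.rng (p.getLast h) = v}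

/-- `α ∈ ℒ*(E)` : a finite labelled path (including the empty word). -/
def IsLbl (α : List A) : Prop := ∃ p : List Edg, G.IsPath p ∧ p.map G.lbl = α

/-- An infinite labelled path. -/
def IsLblInf (α : ℕ → A) : Prop :=
  ∃ p : ℕ → Edg, (∀ n, G.rng (p n) = G.src (p (n + 1))) ∧ ∀ n, G.lbl (p n) = α n

end LGraph

/-- A labelled space: a labelled graph together with an accommodating family `ℬ`. -/
structure LabelledSpace (V Edg A : Type*) extends LGraph V Edg A where
  ℬ : Set (Set V)
  inter_mem : ∀ ⦃X Y : Set V⦄, X ∈ ℬ → Y ∈ ℬ → X ∩ Y ∈ ℬ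
  union_mem : ∀ ⦃X Y : Set V⦄, X ∈ ℬ → Y ∈ ℬ → X ∪ Y ∈ ℬ
  range_mem : ∀ α : List A, α ≠ [] → toLGraph.IsLbl α → toLGraph.relR Set.univ α ∈ ℬ
  relR_mem : ∀ ⦃X : Set V⦄, X ∈ ℬ → ∀ α : List A, toLGraph.IsLbl α → toLGraph.relR X α ∈ ℬ

/-- Words of length `≤ ∞`: finite words are lists, infinite words are sequences. -/
abbrev LWord (A : Type*) := List A ⊕ (ℕ → A)

/-- The length of a word in `ℕ∞`. -/
def wlen {A : Type*} : LWord A → ℕ∞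
  | .inl l => (l.length : ℕ∞)
  | .inr _ => (⊤ : ℕ∞)

/-- `α_{1,n}` : the initial subword of length `n`. -/
def wtake {A : Type*} : LWord A → ℕ → List A
  | .inl l, n => l.take n
  | .inr f, n => (List.range n).map f

/-- Concatenation of a finite word with a word. -/
def wappend {A : Type*} (α : List A) : LWord A → LWord A
  | .inl l => .inl (α ++ l)
  | .inr f => .inr fun n => if h : n < α.length then α.get ⟨n, h⟩ else f (n - α.length)

namespace LabelledSpace

variable {V Edg A : Type*} (L : LabelledSpace V Edg A)

abbrev relR : Set V → List A → Set V := L.toLGraph.relR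

abbrev IsLbl : List A → Prop := L.toLGraph.IsLbl

/-- `r(α)` : the range of a word. -/
def wr (α : List A) : Set V := L.relR Set.univ α

/-- Membership in `ℒ^{≤∞}(E)`. -/
def IsLWord : LWord A → Prop
  | .inl l => L.IsLbl l
  | .inr f => L.toLGraph.IsLblInf f

/-- Weakly left-resolving. -/
def WeaklyLeftResolving : Prop :=
  ∀ ⦃X Y : Set V⦄, X ∈ L.ℬ → Y ∈ L.ℬ → ∀ α : List A, α ≠ [] →
    L.relR (X ∩ Y) α = L.relR X α ∩ L.relR Y α

/-- `ℬ` is closed under relative complements. -/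
def ClosedUnderRelComplements : Prop :=
  ∀ ⦃X Y : Set V⦄, X ∈ L.ℬ → Y ∈ L.ℬ → X \ Y ∈ L.ℬ

/-- `ℬ_α = {A ∈ ℬ : A ⊆ r(α)}`. -/
def Bw (α : List A) : Set (Set V) := {X | X ∈ L.ℬ ∧ X ⊆ L.wr α}

/-- `X_α` : the set of ultrafilters in `ℬ_α`. -/
def Xw (α : List A) : Set (Set (Set V)) := {F | IsUltrafilterIn (L.Bw α) F}

/-- `X_{(α)β} = {F ∈ X_β : r(αβ) ∈ F}`, with the convention `X_{(ω)β} = X_β`. -/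
def XP (α β : List A) : Set (Set (Set V)) :=
  match α with
  | [] => L.Xw β
  | a :: l => {F | F ∈ L.Xw β ∧ L.wr ((a :: l) ++ β) ∈ F}

/-- `g_{(α)β}(F) = {C ∩ r(αβ) : C ∈ F}`. -/
def gmap (α β : List A) (F : Set (Set V)) : Set (Set V) :=
  {D | ∃ C ∈ F, D = C ∩ L.wr (α ++ β)}

/-- `h_{[α]β}(F)` : the upward closure of `F` in `ℬ_β` (only depends on `β`). -/
def hmap (β : List A) (F : Set (Set V)) : Set (Set V) :=
  {D | D ∈ L.Bw β ∧ ∃ C ∈ F, C ⊆ D}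

/-- `f_{β[γ]}(F) = {A ∈ ℬ_β : r(A,γ) ∈ F}`. -/
def fmap (β γ : List A) (F : Set (Set V)) : Set (Set V) :=
  {X | X ∈ L.Bw β ∧ L.relR X γ ∈ F}

/-- `X_α^{sink}`. -/
def Xsink (α : List A) : Set (Set (Set V)) :=
  {F | F ∈ L.Xw α ∧ ∀ b : A, ∃ X ∈ F, L.relR X [b] = ∅}

/-- A complete family (of filters) for the word `w`. -/
def IsCompleteFamily (w : LWord A) (F : ℕ → Set (Set V)) : Prop :=
  (∀ n : ℕ, 0 < n → (n : ℕ∞) ≤ wlen w → IsFilterIn (L.Bw (wtake w n)) (F n)) ∧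
  (IsFilterIn (L.Bw []) (F 0) ∨ F 0 = ∅) ∧
  ∀ n : ℕ, (n : ℕ∞) < wlen w →
    F n = {X | X ∈ L.Bw (wtake w n) ∧ L.relR X ((wtake w (n + 1)).drop n) ∈ F (n + 1)}

/-- A complete family of ultrafilters for the word `w`. -/
def IsCompleteUltraFamily (w : LWord A) (F : ℕ → Set (Set V)) : Prop :=
  (∀ n : ℕ, 0 < n → (n : ℕ∞) ≤ wlen w → IsUltrafilterIn (L.Bw (wtake w n)) (F n)) ∧
  (IsUltrafilterIn (L.Bw []) (F 0) ∨ F 0 = ∅) ∧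
  ∀ n : ℕ, (n : ℕ∞) < wlen w →
    F n = {X | X ∈ L.Bw (wtake w n) ∧ L.relR X ((wtake w (n + 1)).drop n) ∈ F (n + 1)}

/-- Membership in `E(S)`: `none` is the zero element, `some (α, X)` stands for `(α, X, α)`. -/
def ESmem : Option (List A × Set V) → Prop
  | none => True
  | some p => p.2 ∈ L.Bw p.1 ∧ p.2 ≠ ∅

/-- `E(S) ∖ {0}`. -/
def ESnz : Set (Option (List A × Set V)) := {p | L.ESmem p ∧ p ≠ none}

/-- The natural order on `E(S)`: `(α,A,α) ≤ (β,B,β)` iff `α = βα'` and `A ⊆ r(B,α')`. -/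
def ESle : Option (List A × Set V) → Option (List A × Set V) → Prop
  | none, _ => True
  | some _, none => False
  | some p, some q => ∃ γ : List A, p.1 = q.1 ++ γ ∧ p.2 ⊆ L.relR q.2 γ

open Classical in
/-- The product in the semilattice `E(S)`. -/
noncomputable def ESmul :
    Option (List A × Set V) → Option (List A × Set V) → Option (List A × Set V)
  | none, _ => none
  | some _, none => none
  | some p, some q =>
    if p.1 <+: q.1 then
      if L.relR p.2 (q.1.drop p.1.length) ∩ q.2 = ∅ then none
      else some (q.1, L.relR p.2 (q.1.drop p.1.length) ∩ q.2)
    else if q.1 <+: p.1 then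
      if p.2 ∩ L.relR q.2 (p.1.drop q.1.length) = ∅ then none
      else some (p.1, p.2 ∩ L.relR q.2 (p.1.drop q.1.length))
    else none

/-- A filter in `E(S)`. -/
def IsESFilter (ξ : Set (Option (List A × Set V))) : Prop :=
  ξ ⊆ L.ESnz ∧ ξ.Nonempty ∧
    (∀ p ∈ ξ, ∀ q, L.ESmem q → L.ESle p q → q ∈ ξ) ∧
    (∀ p ∈ ξ, ∀ q ∈ ξ, ∃ z ∈ ξ, L.ESle z p ∧ L.ESle z q)

/-- `Z` is a cover for `x` in `E(S)`. -/
def ESCover (x : Option (List A × Set V)) (Z : Set (Option (List A × Set V))) : Prop :=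
  (∀ z ∈ Z, L.ESmem z ∧ L.ESle z x) ∧
  ∀ y, L.ESmem y → y ≠ none → L.ESle y x → ∃ z ∈ Z, L.ESmul y z ≠ none

/-- A tight filter in `E(S)`: every finite cover of an element of the filter meets the filter. -/
def IsTightESFilter (ξ : Set (Option (List A × Set V))) : Prop :=
  L.IsESFilter ξ ∧
    ∀ x ∈ ξ, ∀ Z : Set (Option (List A × Set V)), Z.Finite → L.ESCover x Z →
      (Z ∩ ξ).Nonempty

/-- The filter in `E(S)` associated with the pair `(w, F)` of a word together with a
(complete) family: `ξ = ⋃_n ⋃_{X ∈ F n} ↑(w_{1,n}, X)`. -/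
def filterOf (w : LWord A) (F : ℕ → Set (Set V)) : Set (Option (List A × Set V)) :=
  {p | L.ESmem p ∧
    ∃ n : ℕ, (n : ℕ∞) ≤ wlen w ∧ ∃ X ∈ F n, L.ESle (some (wtake w n, X)) p}

/-- `ξ_n = {X : (w_{1,n}, X, w_{1,n}) ∈ ξ}`. -/
def xiN (_L : LabelledSpace V Edg A) (w : LWord A) (ξ : Set (Option (List A × Set V)))
    (n : ℕ) : Set (Set V) :=
  {X | some (wtake w n, X) ∈ ξ}

/-- `T_w` : the tight filters in `E(S)` whose associated word is `w`. -/
def Tw (w : LWord A) : Set (Set (Option (List A × Set V))) :=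
  {ξ | L.IsTightESFilter ξ ∧
    ∃ F : ℕ → Set (Set V), L.IsCompleteFamily w F ∧ ξ = L.filterOf w F}

/-- `T_{(α)w} = {ξ ∈ T_w : ξ₀ is an ultrafilter in ℬ with r(α) ∈ ξ₀}`, with
`T_{(ω)w} = T_w`. -/
def TwP (α : List A) (w : LWord A) : Set (Set (Option (List A × Set V))) :=
  match α with
  | [] => L.Tw w
  | a :: l =>
    {ξ | ξ ∈ L.Tw w ∧ IsUltrafilterIn (L.Bw []) (L.xiN w ξ 0) ∧ L.wr (a :: l) ∈ L.xiN w ξ 0}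

/-- The family `{J_i}` for `αw` built from a family `{F_n}` for `w`:
`J_{|α|+n} = g_{(α)w_{1,n}}(F_n)` for `1 ≤ n ≤ |w|` and
`J_i = f_{α_{1,i}[α_{i+1,|α|}w₁]}(J_{|α|+1})` for `0 ≤ i ≤ |α|`
(reading `J_{|α|} = g_{(α)ω}(F₀)` and `J_i = f_{α_{1,i}[α_{i+1,|α|}]}(J_{|α|})` when `w = ω`). -/
def Jfamily (α : List A) (w : LWord A) (F : ℕ → Set (Set V)) : ℕ → Set (Set V) :=
  match w with
  | .inl [] => fun i =>
      if i < α.length then L.fmap (α.take i) (α.drop i) (L.gmap α [] (F 0))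
      else L.gmap α [] (F 0)
  | w => fun i =>
      if i ≤ α.length then
        L.fmap (α.take i) (α.drop i ++ wtake w 1) (L.gmap α (wtake w 1) (F 1))
      else L.gmap α (wtake w (i - α.length)) (F (i - α.length))

/-- `G_{(α)w}` as an operation on filters in `E(S)`. -/
def Gmap (α : List A) (w : LWord A) (ξ : Set (Option (List A × Set V))) :
    Set (Option (List A × Set V)) :=
  L.filterOf (wappend α w) (L.Jfamily α w (L.xiN w ξ))

/-- The family `{η_n}` for `w` built from a family for `αw`:
`η_n = h_{[α]w_{1,n}}(F_{|α|+n})`. -/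
def Hfam (α : List A) (w : LWord A) (F : ℕ → Set (Set V)) : ℕ → Set (Set V) :=
  fun n => L.hmap (wtake w n) (F (α.length + n))

/-- `H_{[α]w}` as an operation on filters in `E(S)`. -/
def Hmap (α : List A) (w : LWord A) (ξ : Set (Option (List A × Set V))) :
    Set (Option (List A × Set V)) :=
  L.filterOf w (L.Hfam α w (L.xiN (wappend α w) ξ))

end LabelledSpace

/-- The topology of pointwise convergence on sets of subsets of `V`
(product topology with discrete coordinates, via indicator functions). -/
def memTopology (V : Type*) : TopologicalSpace (Set (Set V)) :=
  show TopologicalSpace (Set V → Prop) from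
    @Pi.topologicalSpace (Set V) (fun _ => Prop) (fun _ => ⊥)

/-!
Since `r(αβ) ⊆ r(β)`, the poset `ℬ_{αβ}` is the down-set `{X ∈ Q | X ⊆ R}` of `R = r(αβ)` in
the meet-closed family `Q = ℬ_β`, and `R ∈ Q`. For any such `Q` and `R`, upward closure in `Q`
and intersection with `R` are mutually inverse between ultrafilters in the down-set and
ultrafilters of `Q` containing `R`. Maximality transfers in both directions through the
criterion that a filter `F` in a meet-closed family is an ultrafilter iff every member meeting
all elements of `F` lies in `F`: a set `X ∈ Q` meets every element of the upward closure of `F`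
iff `X ∩ R` meets every element of `F`.
-/

theorem LGraph.relR_append_subset {V Edg A : Type*} (G : LGraph V Edg A) (S : Set V)
    (α β : List A) : G.relR S (α ++ β) ⊆ G.relR univ β := by
  rcases β with _ | ⟨b, β⟩
  · exact subset_univ _
  rcases α with _ | ⟨a, α⟩
  · rintro v ⟨p, hp, hlbl, hne, -, rfl⟩
    exact ⟨p, hp, hlbl, hne, trivial, rfl⟩
  rintro v ⟨p, hp, hlbl : p.map G.lbl = (a :: α) ++ (b :: β), hne, -, rfl⟩
  set n := (a :: α).length
  have hlbl_drop : (p.drop n).map G.lbl = b :: β := by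
    rw [List.map_drop, hlbl, List.drop_left]
  have hne_drop : p.drop n ≠ [] := by
    rintro h
    simp [h] at hlbl_drop
  exact ⟨p.drop n, List.IsChain.drop hp n, hlbl_drop, hne_drop, trivial,
    congrArg G.rng (List.getLast_drop _)⟩

section FilterIn

variable {V : Type*} {P Q F G : Set (Set V)} {R : Set V}

theorem IsFilterIn.inter_mem (hP : ∀ X ∈ P, ∀ Y ∈ P, X ∩ Y ∈ P) (hF : IsFilterIn P F)
    {X Y : Set V} (hX : X ∈ F) (hY : Y ∈ F) : X ∩ Y ∈ F := by
  obtain ⟨Z, hZ, hZX, hZY⟩ := hF.2.2.2.2 X hX Y hY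
  exact hF.2.2.2.1 Z hZ _ (hP X (hF.1 hX) Y (hF.1 hY)) (subset_inter hZX hZY)

theorem IsFilterIn.isUltrafilterIn_iff (hP : ∀ X ∈ P, ∀ Y ∈ P, X ∩ Y ∈ P)
    (hF : IsFilterIn P F) :
    IsUltrafilterIn P F ↔ ∀ X ∈ P, (∀ Y ∈ F, (X ∩ Y).Nonempty) → X ∈ F := by
  obtain ⟨hFP, hFne, hFempty, hFup, hFdir⟩ := hF
  constructor
  · rintro ⟨-, hmax⟩ X hX hmeets
    -- the filter generated by `F` and `X` is proper, so by maximality it is `F`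
    set H : Set (Set V) := {Z | Z ∈ P ∧ ∃ Y ∈ F, X ∩ Y ⊆ Z}
    have hFH : F ⊆ H := fun Y hY => ⟨hFP hY, Y, hY, inter_subset_right⟩
    have hH : IsFilterIn P H := by
      refine ⟨fun Z hZ => hZ.1, hFne.mono hFH, ?_, ?_, ?_⟩
      · rintro ⟨-, Y, hY, hXY⟩
        exact (hmeets Y hY).ne_empty (subset_empty_iff.mp hXY)
      · rintro Z ⟨-, Y, hY, hXY⟩ W hW hZW
        exact ⟨hW, Y, hY, hXY.trans hZW⟩
      · rintro Z₁ ⟨-, Y₁, hY₁, h₁⟩ Z₂ ⟨-, Y₂, hY₂, h₂⟩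
        obtain ⟨Y, hY, hYY₁, hYY₂⟩ := hFdir Y₁ hY₁ Y₂ hY₂
        exact ⟨X ∩ Y, ⟨hP X hX Y (hFP hY), Y, hY, subset_rfl⟩,
          (inter_subset_inter_right X hYY₁).trans h₁, (inter_subset_inter_right X hYY₂).trans h₂⟩
    obtain ⟨Y, hY⟩ := hFne
    exact hmax H hH hFH ▸ ⟨hX, Y, hY, inter_subset_left⟩
  · refine fun h => ⟨⟨hFP, hFne, hFempty, hFup, hFdir⟩, fun H hH hFH => ?_⟩
    refine (hFH.antisymm fun X hX => h X (hH.1 hX) fun Y hY => ?_).symm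
    obtain ⟨Z, hZ, hZX, hZY⟩ := hH.2.2.2.2 X hX Y (hFH hY)
    exact (nonempty_iff_ne_empty.mpr fun hZe => hH.2.2.1 (hZe ▸ hZ)).mono (subset_inter hZX hZY)

def upperClosureIn (Q F : Set (Set V)) : Set (Set V) :=
  {D | D ∈ Q ∧ ∃ C ∈ F, C ⊆ D}

theorem IsFilterIn.isFilterIn_upperClosureIn (hPQ : P ⊆ Q) (hF : IsFilterIn P F) :
    IsFilterIn Q (upperClosureIn Q F) := by
  obtain ⟨hFP, ⟨C, hC⟩, hFempty, -, hFdir⟩ := hF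
  refine ⟨fun D hD => hD.1, ⟨C, hPQ (hFP hC), C, hC, subset_rfl⟩, ?_, ?_, ?_⟩
  · rintro ⟨-, C, hC, hCe⟩
    exact hFempty (subset_empty_iff.mp hCe ▸ hC)
  · rintro D ⟨-, C, hC, hCD⟩ Y hY hDY
    exact ⟨hY, C, hC, hCD.trans hDY⟩
  · rintro D₁ ⟨-, C₁, hC₁, h₁⟩ D₂ ⟨-, C₂, hC₂, h₂⟩
    obtain ⟨C, hC, hCC₁, hCC₂⟩ := hFdir C₁ hC₁ C₂ hC₂
    exact ⟨C, ⟨hPQ (hFP hC), C, hC, subset_rfl⟩, hCC₁.trans h₁, hCC₂.trans h₂⟩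

theorem inter_mem_sep_subset (hQ : ∀ X ∈ Q, ∀ Y ∈ Q, X ∩ Y ∈ Q) :
    ∀ X ∈ {X ∈ Q | X ⊆ R}, ∀ Y ∈ {X ∈ Q | X ⊆ R}, X ∩ Y ∈ {X ∈ Q | X ⊆ R} :=
  fun X hX Y hY => ⟨hQ X hX.1 Y hY.1, inter_subset_left.trans hX.2⟩

theorem IsUltrafilterIn.isUltrafilterIn_upperClosureIn (hQ : ∀ X ∈ Q, ∀ Y ∈ Q, X ∩ Y ∈ Q)
    (hR : R ∈ Q) (hF : IsUltrafilterIn {X ∈ Q | X ⊆ R} F) :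
    IsUltrafilterIn Q (upperClosureIn Q F) := by
  have hFQ := hF.1.isFilterIn_upperClosureIn fun _ hX => hX.1
  refine (hFQ.isUltrafilterIn_iff hQ).mpr fun X hX hmeets => ⟨hX, X ∩ R, ?_, inter_subset_left⟩
  refine (hF.1.isUltrafilterIn_iff (inter_mem_sep_subset hQ)).mp hF (X ∩ R)
    ⟨hQ X hX R hR, inter_subset_right⟩ fun C hC => ?_
  rw [inter_assoc, inter_eq_right.mpr (hF.1.1 hC).2]
  exact hmeets C ⟨(hF.1.1 hC).1, C, hC, subset_rfl⟩

theorem mapsTo_upperClosureIn (hQ : ∀ X ∈ Q, ∀ Y ∈ Q, X ∩ Y ∈ Q) (hR : R ∈ Q) :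
    MapsTo (upperClosureIn Q) {F | IsUltrafilterIn {X ∈ Q | X ⊆ R} F}
      {G | IsUltrafilterIn Q G ∧ R ∈ G} := by
  intro F hF
  obtain ⟨C, hC⟩ := hF.1.2.1
  exact ⟨hF.isUltrafilterIn_upperClosureIn hQ hR, hR, C, hC, (hF.1.1 hC).2⟩

theorem IsFilterIn.image_inter_upperClosureIn (hQ : ∀ X ∈ Q, ∀ Y ∈ Q, X ∩ Y ∈ Q) (hR : R ∈ Q)
    (hF : IsFilterIn {X ∈ Q | X ⊆ R} F) : (· ∩ R) '' upperClosureIn Q F = F := by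
  ext X
  constructor
  · rintro ⟨D, ⟨hD, C, hC, hCD⟩, rfl⟩
    have hCR : C ⊆ R := (hF.1 hC).2
    exact hF.2.2.2.1 C hC _ ⟨hQ D hD R hR, inter_subset_right⟩ (subset_inter hCD hCR)
  · intro hX
    exact ⟨X, ⟨(hF.1 hX).1, X, hX, subset_rfl⟩, inter_eq_left.mpr (hF.1 hX).2⟩

theorem IsFilterIn.image_inter_eq_sep (hQ : ∀ X ∈ Q, ∀ Y ∈ Q, X ∩ Y ∈ Q) (hG : IsFilterIn Q G)
    (hRG : R ∈ G) : (· ∩ R) '' G = {X ∈ G | X ⊆ R} := by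
  ext X
  constructor
  · rintro ⟨C, hC, rfl⟩
    exact ⟨hG.inter_mem hQ hC hRG, inter_subset_right⟩
  · rintro ⟨hX, hXR⟩
    exact ⟨X, hX, inter_eq_left.mpr hXR⟩

theorem IsUltrafilterIn.image_inter (hQ : ∀ X ∈ Q, ∀ Y ∈ Q, X ∩ Y ∈ Q)
    (hG : IsUltrafilterIn Q G) (hRG : R ∈ G) : IsUltrafilterIn {X ∈ Q | X ⊆ R} ((· ∩ R) '' G) := by
  obtain ⟨hGQ, -, hGempty, hGup, hGdir⟩ := hG.1
  rw [hG.1.image_inter_eq_sep hQ hRG]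
  have hGR : IsFilterIn {X ∈ Q | X ⊆ R} {X ∈ G | X ⊆ R} := by
    refine ⟨fun X hX => ⟨hGQ hX.1, hX.2⟩, ⟨R, hRG, subset_rfl⟩, fun h => hGempty h.1, ?_, ?_⟩
    · rintro X ⟨hX, -⟩ Y ⟨hY, hYR⟩ hXY
      exact ⟨hGup X hX Y hY hXY, hYR⟩
    · rintro X ⟨hX, hXR⟩ Y ⟨hY, -⟩
      obtain ⟨Z, hZ, hZX, hZY⟩ := hGdir X hX Y hY
      exact ⟨Z, ⟨hZ, hZX.trans hXR⟩, hZX, hZY⟩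
  refine (hGR.isUltrafilterIn_iff (inter_mem_sep_subset hQ)).mpr fun X hX hmeets => ⟨?_, hX.2⟩
  refine (hG.1.isUltrafilterIn_iff hQ).mp hG X hX.1 fun Y hY => ?_
  exact (hmeets (Y ∩ R) ⟨hG.1.inter_mem hQ hY hRG, inter_subset_right⟩).mono
    (inter_subset_inter_right X inter_subset_left)

theorem IsFilterIn.upperClosureIn_image_inter (hQ : ∀ X ∈ Q, ∀ Y ∈ Q, X ∩ Y ∈ Q)
    (hG : IsFilterIn Q G) (hRG : R ∈ G) : upperClosureIn Q ((· ∩ R) '' G) = G := by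
  rw [hG.image_inter_eq_sep hQ hRG]
  ext D
  constructor
  · rintro ⟨hD, C, ⟨hC, -⟩, hCD⟩
    exact hG.2.2.2.1 C hC D hD hCD
  · intro hD
    exact ⟨hG.1 hD, D ∩ R, ⟨hG.inter_mem hQ hD hRG, inter_subset_right⟩, inter_subset_left⟩

theorem mapsTo_image_inter (hQ : ∀ X ∈ Q, ∀ Y ∈ Q, X ∩ Y ∈ Q) :
    MapsTo (image (· ∩ R)) {G | IsUltrafilterIn Q G ∧ R ∈ G}
      {F | IsUltrafilterIn {X ∈ Q | X ⊆ R} F} :=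
  fun _ hG => hG.1.image_inter hQ hG.2

theorem invOn_upperClosureIn_image_inter (hQ : ∀ X ∈ Q, ∀ Y ∈ Q, X ∩ Y ∈ Q) (hR : R ∈ Q) :
    InvOn (upperClosureIn Q) (image (· ∩ R)) {G | IsUltrafilterIn Q G ∧ R ∈ G}
      {F | IsUltrafilterIn {X ∈ Q | X ⊆ R} F} :=
  ⟨fun _ hG => hG.1.1.upperClosureIn_image_inter hQ hG.2,
    fun _ hF => hF.1.image_inter_upperClosureIn hQ hR⟩

end FilterIn

namespace LabelledSpace

variable {V Edg A : Type*} (L : LabelledSpace V Edg A)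

theorem Bw_inter_mem (β : List A) : ∀ X ∈ L.Bw β, ∀ Y ∈ L.Bw β, X ∩ Y ∈ L.Bw β :=
  fun _ hX _ hY => ⟨L.inter_mem hX.1 hY.1, inter_subset_left.trans hX.2⟩

theorem Bw_append (α β : List A) : L.Bw (α ++ β) = {X ∈ L.Bw β | X ⊆ L.wr (α ++ β)} := by
  ext X
  exact ⟨fun hX => ⟨⟨hX.1, hX.2.trans (L.relR_append_subset _ α β)⟩, hX.2⟩,
    fun hX => ⟨hX.1.1, hX.2⟩⟩

theorem XP_of_ne_nil {α : List A} (hα : α ≠ []) (β : List A) :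
    L.XP α β = {F | F ∈ L.Xw β ∧ L.wr (α ++ β) ∈ F} := by
  cases α with
  | nil => exact absurd rfl hα
  | cons => rfl

theorem hmap_eq_upperClosureIn (β : List A) : L.hmap β = upperClosureIn (L.Bw β) := rfl

theorem gmap_eq_image (α β : List A) : L.gmap α β = Set.image (· ∩ L.wr (α ++ β)) := by
  ext F X
  exact ⟨fun ⟨C, hC, hX⟩ => ⟨C, hC, hX.symm⟩, fun ⟨C, hC, hX⟩ => ⟨C, hC, hX.symm⟩⟩

end LabelledSpace

section
variable {V Edg A : Type*} (L : LabelledSpace V Edg A)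

theorem hmap_gmap_inverses (α β : List A) (hα : α ≠ []) (hαβ : L.IsLbl (α ++ β)) :
    (∀ F ∈ L.Xw (α ++ β), L.hmap β F ∈ L.XP α β) ∧
    (∀ F ∈ L.Xw (α ++ β), L.gmap α β (L.hmap β F) = F) ∧
    (∀ F ∈ L.XP α β, L.hmap β (L.gmap α β F) = F) ∧
    Set.BijOn (L.gmap α β) (L.XP α β) (L.Xw (α ++ β)) := by
  have hQ := L.Bw_inter_mem β
  have hR : L.wr (α ++ β) ∈ L.Bw β :=
    ⟨L.range_mem _ (List.append_ne_nil_of_left_ne_nil hα β) hαβ, L.relR_append_subset _ α β⟩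
  rw [L.XP_of_ne_nil hα, LabelledSpace.Xw, L.Bw_append, L.hmap_eq_upperClosureIn,
    L.gmap_eq_image]
  have hinv := invOn_upperClosureIn_image_inter hQ hR
  have hh := mapsTo_upperClosureIn hQ hR
  exact ⟨hh, hinv.2, hinv.1, hinv.bijOn (mapsTo_image_inter hQ) hh⟩

end
end

section
/- Let (E,ℒ,ℬ) be a labelled space, let α be a nonempty finite labelled path and β ∈ ℒ*(E) be such that αβ is a labelled path. Then (i) h_{[α]β}(X_{αβ}^{sink}) ⊆ X_β^{sink}, and (ii) the map h_{[α]β} : X_{αβ} → X_β is continuous. -/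
open Set

/-!
`h_{[α]β}` is the upward closure from `ℬ_{αβ}` into `ℬ_β`, and `ℬ_{αβ}` is closed downwards
inside `ℬ_β`. Upward closure along such an inclusion preserves ultrafilters: a larger filter `G`
traces on `ℬ_{αβ}` to a filter containing `F`, hence equal to `F` by maximality, and directedness
of `G` puts an element of `F` below each member of `G`. A witness `A ∈ F` with `r(A,b) = ∅`
stays in the closure, so sinks go to sinks. Finally `r(αβ) ∈ ℬ`, so on filters
`D ∈ h_{[α]β}(F)` iff `D ∩ r(αβ) ∈ F`: every coordinate of `h_{[α]β}(F)` is a coordinate of `F`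
(or constant), which is continuity for pointwise convergence.
-/

namespace IsFilterIn

variable {V : Type*} {P Q F G : Set (Set V)}

theorem upwardClosure (hF : IsFilterIn P F) (hPQ : P ⊆ Q) :
    IsFilterIn Q {D | D ∈ Q ∧ ∃ C ∈ F, C ⊆ D} := by
  obtain ⟨hFP, ⟨C₀, hC₀⟩, hempty, -, hdir⟩ := hF
  refine ⟨fun D hD => hD.1, ⟨C₀, hPQ (hFP hC₀), C₀, hC₀, subset_rfl⟩, ?_, ?_, ?_⟩
  · rintro ⟨-, C, hC, hC_empty⟩
    exact hempty (subset_empty_iff.mp hC_empty ▸ hC)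
  · rintro X ⟨-, C, hC, hCX⟩ Y hY hXY
    exact ⟨hY, C, hC, hCX.trans hXY⟩
  · rintro X ⟨-, C, hC, hCX⟩ Y ⟨-, C', hC', hC'Y⟩
    obtain ⟨Z, hZ, hZC, hZC'⟩ := hdir C hC C' hC'
    exact ⟨Z, ⟨hPQ (hFP hZ), Z, hZ, subset_rfl⟩, hZC.trans hCX, hZC'.trans hC'Y⟩

theorem inter_of_isLower (hG : IsFilterIn Q G) (hPQ : P ⊆ Q)
    (hP : ∀ X ∈ Q, ∀ Y ∈ P, X ⊆ Y → X ∈ P) (hGP : (G ∩ P).Nonempty) :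
    IsFilterIn P (G ∩ P) := by
  obtain ⟨hGQ, -, hempty, hup, hdir⟩ := hG
  refine ⟨inter_subset_right, hGP, fun h => hempty h.1, ?_, ?_⟩
  · rintro X ⟨hXG, -⟩ Y hY hXY
    exact ⟨hup X hXG Y (hPQ hY) hXY, hY⟩
  · rintro X ⟨hXG, hXP⟩ Y ⟨hYG, -⟩
    obtain ⟨Z, hZ, hZX, hZY⟩ := hdir X hXG Y hYG
    exact ⟨Z, ⟨hZ, hP Z (hGQ hZ) X hXP hZX⟩, hZX, hZY⟩

end IsFilterIn

theorem IsUltrafilterIn.upwardClosure {V : Type*} {P Q F : Set (Set V)}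
    (hF : IsUltrafilterIn P F) (hPQ : P ⊆ Q) (hP : ∀ X ∈ Q, ∀ Y ∈ P, X ⊆ Y → X ∈ P) :
    IsUltrafilterIn Q {D | D ∈ Q ∧ ∃ C ∈ F, C ⊆ D} := by
  obtain ⟨hFfilter, hFmax⟩ := hF
  have hFP : F ⊆ P := hFfilter.1
  obtain ⟨C₀, hC₀⟩ := hFfilter.2.1
  refine ⟨hFfilter.upwardClosure hPQ, fun G hG hUG => ?_⟩
  have hFG : F ⊆ G := fun C hC => hUG ⟨hPQ (hFP hC), C, hC, subset_rfl⟩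
  have hGP_eq : G ∩ P = F :=
    hFmax _ (hG.inter_of_isLower hPQ hP ⟨C₀, hFG hC₀, hFP hC₀⟩)
      fun C hC => ⟨hFG hC, hFP hC⟩
  refine Subset.antisymm (fun D hD => ⟨hG.1 hD, ?_⟩) hUG
  obtain ⟨Z, hZ, hZD, hZC₀⟩ := hG.2.2.2.2 D hD C₀ (hFG hC₀)
  exact ⟨Z, hGP_eq ▸ ⟨hZ, hP Z (hG.1 hZ) C₀ (hFP hC₀) hZC₀⟩, hZD⟩

theorem continuous_inter_preimage_memTopology {V : Type*} (s : Set (Set V))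
    (g : Set V → Set V) :
    @Continuous _ _ (memTopology V) (memTopology V) fun F : Set (Set V) => s ∩ g ⁻¹' F := by
  let _ : TopologicalSpace Prop := ⊥
  let _ : TopologicalSpace (Set (Set V)) := memTopology V
  change Continuous fun (F : Set V → Prop) (D : Set V) => D ∈ s ∧ F (g D)
  refine continuous_pi fun D => ?_
  by_cases hD : D ∈ s
  · simpa only [hD, true_and] using continuous_apply (g D)
  · simpa only [hD, false_and] using continuous_const

namespace LGraph

variable {V Edg A : Type*} {G : LGraph V Edg A}

theorem mem_relR_of_ne_nil {S : Set V} {γ : List A} (hγ : γ ≠ []) {v : V} :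
    v ∈ G.relR S γ ↔ ∃ p : List Edg, G.IsPath p ∧ p.map G.lbl = γ ∧
      ∃ h : p ≠ [], G.src (p.head h) ∈ S ∧ G.rng (p.getLast h) = v := by
  cases γ with
  | nil => exact absurd rfl hγ
  | cons => rfl

theorem relR_append_subset_s11 (S : Set V) (α β : List A) : G.relR S (α ++ β) ⊆ G.relR univ β := by
  intro v hv
  rcases eq_or_ne β [] with rfl | hβ
  · exact trivial
  rw [mem_relR_of_ne_nil (by simp [hβ])] at hv
  rw [mem_relR_of_ne_nil hβ]
  obtain ⟨p, hp, hlbl, -, -, rfl⟩ := hv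
  have hdrop : (p.drop α.length).map G.lbl = β := by
    rw [List.map_drop, hlbl, List.drop_left]
  have hdrop_ne : p.drop α.length ≠ [] := fun h => hβ (by simp [← hdrop, h])
  exact ⟨_, hp.drop _, hdrop, hdrop_ne, trivial, by rw [List.getLast_drop hdrop_ne]⟩

end LGraph

namespace LabelledSpace

variable {V Edg A : Type*} {L : LabelledSpace V Edg A}

theorem wr_append_subset (α β : List A) : L.wr (α ++ β) ⊆ L.wr β :=
  LGraph.relR_append_subset_s11 _ α β

theorem Bw_append_subset (α β : List A) : L.Bw (α ++ β) ⊆ L.Bw β :=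
  fun _ hX => ⟨hX.1, hX.2.trans (wr_append_subset α β)⟩

theorem mem_Bw_of_subset {α : List A} {X Y : Set V} (hX : X ∈ L.ℬ) (hY : Y ∈ L.Bw α)
    (hXY : X ⊆ Y) : X ∈ L.Bw α :=
  ⟨hX, hXY.trans hY.2⟩

theorem subset_hmap {α β : List A} {F : Set (Set V)} (hF : F ⊆ L.Bw (α ++ β)) :
    F ⊆ L.hmap β F :=
  fun C hC => ⟨Bw_append_subset α β (hF hC), C, hC, subset_rfl⟩

theorem isUltrafilterIn_hmap {α β : List A} {F : Set (Set V)}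
    (hF : IsUltrafilterIn (L.Bw (α ++ β)) F) : IsUltrafilterIn (L.Bw β) (L.hmap β F) :=
  hF.upwardClosure (Bw_append_subset α β) fun _ hX _ hY hXY => mem_Bw_of_subset hX.1 hY hXY

theorem hmap_sink {α β : List A} {F : Set (Set V)} (hF : F ∈ L.Xsink (α ++ β)) :
    L.hmap β F ∈ L.Xsink β := by
  obtain ⟨hFultra, hsink⟩ := hF
  refine ⟨isUltrafilterIn_hmap hFultra, fun b => ?_⟩
  obtain ⟨X, hX, hXb⟩ := hsink b
  exact ⟨X, subset_hmap hFultra.1.1 hX, hXb⟩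

theorem hmap_eq_inter_preimage {α β : List A} (hα : α ≠ []) (hαβ : L.IsLbl (α ++ β))
    {F : Set (Set V)} (hF : IsFilterIn (L.Bw (α ++ β)) F) :
    L.hmap β F = L.Bw β ∩ (· ∩ L.wr (α ++ β)) ⁻¹' F := by
  have hR : L.wr (α ++ β) ∈ L.ℬ := L.range_mem _ (by simp [hα]) hαβ
  ext D
  constructor
  · rintro ⟨hD, C, hC, hCD⟩
    exact ⟨hD, hF.2.2.2.1 C hC _ ⟨L.inter_mem hD.1 hR, inter_subset_right⟩
      (subset_inter hCD (hF.1 hC).2)⟩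
  · rintro ⟨hD, hDR⟩
    exact ⟨hD, _, hDR, inter_subset_left⟩

end LabelledSpace

section
variable {V Edg A : Type*} (L : LabelledSpace V Edg A)

theorem hmap_sink_continuous (α β : List A) (hα : α ≠ [])
    (hαβ : L.IsLbl (α ++ β)) :
    (∀ F ∈ L.Xsink (α ++ β), L.hmap β F ∈ L.Xsink β) ∧
    @ContinuousOn (Set (Set V)) (Set (Set V)) (memTopology V) (memTopology V)
      (L.hmap β) (L.Xw (α ++ β)) := by
  let _ := memTopology V
  refine ⟨fun F hF => LabelledSpace.hmap_sink hF, ?_⟩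
  refine (continuous_inter_preimage_memTopology (L.Bw β) (· ∩ L.wr (α ++ β))).continuousOn.congr
    fun F hF => ?_
  exact LabelledSpace.hmap_eq_inter_preimage hα hαβ hF.1
end
end
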